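/- arXiv:1105.4069 — 5 statements merged into one kernel-verified Lean document; each statement's English description precedes it below -/
import Mathlib

section
/- For any weighting functions w : X → ℝ, ω : Y → ℝ, and image f : X → Y, one has (δ_0 ⊗ ω) ∗ (LH_w f) = (w̃ ⊗ ω) ∗ 1_f, where convolutions are over the product group X × Y, 1_f(x,y) = δ_y(f(x)), and (g ⊗ h)(x,y) := g(x)h(y). -/
theorem local_histogram_single_convolution
    (X Y : Type) [AddCommGroup X] [Fintype X] [DecidableEq X]
    [AddCommGroup Y] [Fintype Y] [DecidableEq Y]
    (w : X → ℝ) (ω : Y → ℝ) (f : X → Y) :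
    ∀ p : X × Y,
      (∑ q : X × Y,
          ((if q.1 = (0 : X) then (1 : ℝ) else 0) * ω q.2) *
            (∑ x' : X, w x' * (if f ((p.1 - q.1) + x') = p.2 - q.2 then (1 : ℝ) else 0)))
      =
      (∑ q : X × Y,
          (w (-q.1) * ω q.2) *
            (if f (p.1 - q.1) = p.2 - q.2 then (1 : ℝ) else 0)) := by
  intro p
  rw [Fintype.sum_prod_type, Fintype.sum_prod_type, Finset.sum_comm]
  simp only [ite_mul, one_mul, zero_mul, Finset.sum_ite_eq', Finset.mem_univ, if_true,
    sub_zero]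
  rw [Finset.sum_comm]
  refine Finset.sum_congr rfl fun x _ => ?_
  rw [Finset.mul_sum]
  refine Fintype.sum_equiv (Equiv.neg X) _ _ fun x' => ?_
  simp [Equiv.neg_apply, sub_neg_eq_add]
  ring
end

section
/- Expected local histogram of a composite image: for any images f₀,...,f_{N−1} : X → Y, weighting function w : X → ℝ, occlusion model P_Φ on ℓ(X, ℤ_N), and all x ∈ X, y ∈ Y, ∑_φ P_Φ(φ) (LH_w (occ_φ {f_n}))(x,y) = ∑_{n=0}^{N−1} ∑_{x'∈X} w(x') δ_y(f_n(x+x')) 1̄_Φ(x+x', n), where occ_φ{f_n}(x) := f_{φ(x)}(x) and 1̄_Φ(x,n) := ∑_{φ : φ(x)=n} P_Φ(φ). -/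
theorem expected_local_histogram_of_occlusion
    (X Y : Type) [AddCommGroup X] [Fintype X] [DecidableEq X]
    [AddCommGroup Y] [Fintype Y] [DecidableEq Y]
    (N : ℕ) (hN : 1 ≤ N) (f : Fin N → X → Y) (w : X → ℝ)
    (P : (X → Fin N) → ℝ)
    (hP0 : ∀ φ, 0 ≤ P φ) (hP1 : ∑ φ : X → Fin N, P φ = 1)
    (x : X) (y : Y) :
    (∑ φ : X → Fin N, P φ *
        (∑ x' : X, w x' * (if f (φ (x + x')) (x + x') = y then (1 : ℝ) else 0)))
      =
    ∑ n : Fin N, ∑ x' : X,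
        w x' * (if f n (x + x') = y then (1 : ℝ) else 0) *
          (∑ φ : X → Fin N, if φ (x + x') = n then P φ else 0) := by
  simp_rw [Finset.mul_sum, mul_ite, mul_zero]
  conv_lhs => rw [Finset.sum_comm]
  conv_rhs => rw [Finset.sum_comm]
  refine Finset.sum_congr rfl fun x' _ => ?_
  rw [Finset.sum_comm]
  refine Finset.sum_congr rfl fun φ _ => ?_
  simp [Finset.sum_ite_eq, mul_comm, mul_left_comm]
end

section
/- Error bound for expected local histograms: with the notation above and any nonnegative w : X → ℝ, the quantity ε := ∑_φ P_Φ(φ)(LH_w occ_φ{f_n})(x,y) − ∑_{n} 1̄_Φ(x,n)(LH_w f_n)(x,y) satisfies |ε| ≤ ∑_{n=0}^{N−1} ∑_{x'∈X} w(x') |1̄_Φ(x+x',n) − 1̄_Φ(x,n)|. -/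
theorem expected_local_histogram_error_bound
    (X Y : Type) [AddCommGroup X] [Fintype X] [DecidableEq X]
    [AddCommGroup Y] [Fintype Y] [DecidableEq Y]
    (N : ℕ) (hN : 1 ≤ N) (f : Fin N → X → Y) (w : X → ℝ)
    (hw : ∀ x, 0 ≤ w x)
    (P : (X → Fin N) → ℝ)
    (hP0 : ∀ φ, 0 ≤ P φ) (hP1 : ∑ φ : X → Fin N, P φ = 1)
    (x : X) (y : Y) :
    |(∑ φ : X → Fin N, P φ *
          (∑ x' : X, w x' * (if f (φ (x + x')) (x + x') = y then (1 : ℝ) else 0)))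
        -
      ∑ n : Fin N,
        (∑ φ : X → Fin N, if φ x = n then P φ else 0) *
          (∑ x' : X, w x' * (if f n (x + x') = y then (1 : ℝ) else 0))|
      ≤
    ∑ n : Fin N, ∑ x' : X,
        w x' *
          |(∑ φ : X → Fin N, if φ (x + x') = n then P φ else 0) -
            (∑ φ : X → Fin N, if φ x = n then P φ else 0)| := by
  set q : X → Fin N → ℝ := fun a n => ∑ φ : X → Fin N, if φ a = n then P φ else 0 with hq
  have key : ∀ (a : X) (g : Fin N → ℝ),
      ∑ φ : X → Fin N, P φ * g (φ a) = ∑ n : Fin N, q a n * g n := by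
    intro a g
    have : ∀ n : Fin N, q a n * g n
        = ∑ φ : X → Fin N, if φ a = n then P φ * g n else 0 := by
      intro n
      rw [hq, Finset.sum_mul]
      exact Finset.sum_congr rfl fun φ _ => by split <;> simp
    simp_rw [this]
    rw [Finset.sum_comm]
    refine Finset.sum_congr rfl fun φ _ => ?_
    rw [Finset.sum_ite_eq Finset.univ (φ a) (fun n => P φ * g n)]
    simp
  have hLHS : (∑ φ : X → Fin N, P φ *
          (∑ x' : X, w x' * (if f (φ (x + x')) (x + x') = y then (1 : ℝ) else 0)))
      = ∑ n : Fin N, ∑ x' : X,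
          q (x + x') n * (w x' * (if f n (x + x') = y then (1 : ℝ) else 0)) := by
    simp_rw [Finset.mul_sum]
    rw [Finset.sum_comm]
    rw [Finset.sum_comm (γ := Fin N)]
    refine Finset.sum_congr rfl fun x' _ => ?_
    exact key (x + x') (fun n => w x' * (if f n (x + x') = y then (1 : ℝ) else 0))
  have hRHS : (∑ n : Fin N, q x n *
          (∑ x' : X, w x' * (if f n (x + x') = y then (1 : ℝ) else 0)))
      = ∑ n : Fin N, ∑ x' : X,
          q x n * (w x' * (if f n (x + x') = y then (1 : ℝ) else 0)) := by
    simp_rw [Finset.mul_sum]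
  rw [hLHS, hRHS, ← Finset.sum_sub_distrib]
  refine le_trans (Finset.abs_sum_le_sum_abs _ _) ?_
  refine Finset.sum_le_sum fun n _ => ?_
  rw [← Finset.sum_sub_distrib]
  refine le_trans (Finset.abs_sum_le_sum_abs _ _) ?_
  refine Finset.sum_le_sum fun x' _ => ?_
  rw [← sub_mul, abs_mul]
  have hb : |w x' * (if f n (x + x') = y then (1 : ℝ) else 0)| ≤ w x' := by
    rw [abs_mul, abs_of_nonneg (hw x')]
    have : |if f n (x + x') = y then (1 : ℝ) else 0| ≤ 1 := by split <;> simp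
    calc w x' * |if f n (x + x') = y then (1 : ℝ) else 0|
        ≤ w x' * 1 := mul_le_mul_of_nonneg_left this (hw x')
      _ = w x' := mul_one _
  exact le_trans (mul_le_mul_of_nonneg_left hb (abs_nonneg _)) (le_of_eq (mul_comm _ _))
end

section
/- Flat occlusion models yield exact convex decompositions of expected local histograms: if the occlusion model P_Φ is flat, i.e. there exist scalars λ_0,...,λ_{N−1} with ∑_{φ : φ(x)=n} P_Φ(φ) = λ_n for every x ∈ X and n ∈ ℤ_N, then for all x ∈ X, y ∈ Y, ∑_φ P_Φ(φ)(LH_w occ_φ{f_n}_{n=0}^{N−1})(x,y) = ∑_{n=0}^{N−1} λ_n (LH_w f_n)(x,y). -/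
theorem flat_occlusion_convex_decomposition
    (X Y : Type) [AddCommGroup X] [Fintype X] [DecidableEq X]
    [AddCommGroup Y] [Fintype Y] [DecidableEq Y]
    (N : ℕ) (hN : 1 ≤ N) (f : Fin N → X → Y) (w : X → ℝ)
    (P : (X → Fin N) → ℝ)
    (hP0 : ∀ φ, 0 ≤ P φ) (hP1 : ∑ φ : X → Fin N, P φ = 1)
    (lam : Fin N → ℝ)
    (hflat : ∀ (x : X) (n : Fin N),
      (∑ φ : X → Fin N, if φ x = n then P φ else 0) = lam n)
    (x : X) (y : Y) :
    (∑ φ : X → Fin N, P φ *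
        (∑ x' : X, w x' * (if f (φ (x + x')) (x + x') = y then (1 : ℝ) else 0)))
      =
    ∑ n : Fin N, lam n *
        (∑ x' : X, w x' * (if f n (x + x') = y then (1 : ℝ) else 0)) := by
  have key : ∀ (φ : X → Fin N) (x' : X),
      P φ * (w x' * (if f (φ (x + x')) (x + x') = y then (1 : ℝ) else 0))
      = ∑ n : Fin N, (if φ (x + x') = n then P φ else 0) *
          (w x' * (if f n (x + x') = y then (1 : ℝ) else 0)) := by
    intro φ x'
    rw [Finset.sum_eq_single (φ (x + x'))]
    · simp
    · intro b _ hb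
      simp [Ne.symm hb]
    · simp
  calc (∑ φ : X → Fin N, P φ *
        (∑ x' : X, w x' * (if f (φ (x + x')) (x + x') = y then (1 : ℝ) else 0)))
      = ∑ φ : X → Fin N, ∑ x' : X, ∑ n : Fin N,
          (if φ (x + x') = n then P φ else 0) *
          (w x' * (if f n (x + x') = y then (1 : ℝ) else 0)) := by
        simp_rw [Finset.mul_sum]; exact Finset.sum_congr rfl fun φ _ =>
          Finset.sum_congr rfl fun x' _ => key φ x'
    _ = ∑ x' : X, ∑ n : Fin N, ∑ φ : X → Fin N,
          (if φ (x + x') = n then P φ else 0) *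
          (w x' * (if f n (x + x') = y then (1 : ℝ) else 0)) := by
        rw [Finset.sum_comm]
        exact Finset.sum_congr rfl fun x' _ => Finset.sum_comm
    _ = ∑ n : Fin N, ∑ x' : X, (∑ φ : X → Fin N, if φ (x + x') = n then P φ else 0) *
          (w x' * (if f n (x + x') = y then (1 : ℝ) else 0)) := by
        rw [Finset.sum_comm]
        exact Finset.sum_congr rfl fun n _ => Finset.sum_congr rfl
          fun x' _ => (Finset.sum_mul _ _ _).symm
    _ = ∑ n : Fin N, lam n *
        (∑ x' : X, w x' * (if f n (x + x') = y then (1 : ℝ) else 0)) := by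
        simp_rw [hflat, Finset.mul_sum]
end

section
/- Overlay preserves flatness: if P_Φ, P_Ψ, P_Σ are flat occlusion models on ℓ(X, ℤ_{N_φ}), ℓ(X, ℤ_{N_ψ}), ℓ(X, ℤ_2) respectively, with flat constants λ_{Φ,n}, λ_{Ψ,m}, λ_{Σ,0}, λ_{Σ,1}, then the overlay model P_{Φ#_ΣΨ} is flat on ℓ(X, ℤ_{N_φ+N_ψ}) with constants λ_n = λ_{Φ,n} λ_{Σ,0} for 0 ≤ n < N_φ and λ_n = λ_{Ψ,n−N_φ} λ_{Σ,1} for N_φ ≤ n < N_φ+N_ψ. -/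
/-!
The overlay shows a label `n < Nφ` at `x` exactly when `σ x = 0` and `φ x = n`, and the label
`Nφ + m` exactly when `σ x = 1` and `ψ x = m`. The three models are sampled independently, so the
probability of such an event factorises into the flat constants, the unconstrained model
contributing its total mass `1`.
-/

/-- The overlay of `φ` over `ψ` with respect to the binary mask `σ`. -/
def overlayLabel {X : Type} (Nφ Nψ : ℕ)
    (φ : X → Fin Nφ) (ψ : X → Fin Nψ) (σ : X → Fin 2) : X → Fin (Nφ + Nψ) :=
  fun x => if σ x = 0 then Fin.castAdd Nψ (φ x) else Fin.natAdd Nφ (ψ x)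

theorem Fintype.sum_prod_ite_and_mul {R A B C : Type*} [CommSemiring R]
    [Fintype A] [Fintype B] [Fintype C]
    (p : A → Prop) (q : B → Prop) (r : C → Prop) [DecidablePred p] [DecidablePred q]
    [DecidablePred r] (f : A → R) (g : B → R) (h : C → R) :
    ∑ t : A × B × C, (if p t.1 ∧ q t.2.1 ∧ r t.2.2 then f t.1 * g t.2.1 * h t.2.2 else 0) =
      (∑ a, if p a then f a else 0) * (∑ b, if q b then g b else 0) *
        (∑ c, if r c then h c else 0) := by
  simp_rw [Fintype.sum_prod_type, ← and_assoc, ← ite_zero_mul_ite_zero, ← Finset.mul_sum,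
    ← Finset.sum_mul, Finset.sum_mul_sum]

section overlay

variable {X : Type} {Nφ Nψ : ℕ} (φ : X → Fin Nφ) (ψ : X → Fin Nψ) (σ : X → Fin 2) (x : X)

theorem overlayLabel_eq_castAdd_iff (k : Fin Nφ) :
    overlayLabel Nφ Nψ φ ψ σ x = Fin.castAdd Nψ k ↔ φ x = k ∧ σ x = 0 := by
  unfold overlayLabel
  split_ifs with hσ <;> simp [hσ, Fin.ext_iff]
  omega

theorem overlayLabel_eq_natAdd_iff (k : Fin Nψ) :
    overlayLabel Nφ Nψ φ ψ σ x = Fin.natAdd Nφ k ↔ ψ x = k ∧ σ x = 1 := by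
  unfold overlayLabel
  split_ifs with hσ
  · simp [hσ, Fin.ext_iff]
    omega
  · simp [Fin.eq_one_of_ne_zero _ hσ]

end overlay

theorem overlay_preserves_flatness
    (X : Type) [Fintype X] [DecidableEq X]
    (Nφ Nψ : ℕ)
    (PΦ : (X → Fin Nφ) → ℝ) (PΨ : (X → Fin Nψ) → ℝ) (PSig : (X → Fin 2) → ℝ)
    (hPΦ1 : ∑ φ : X → Fin Nφ, PΦ φ = 1)
    (hPΨ1 : ∑ ψ : X → Fin Nψ, PΨ ψ = 1)
    (lamΦ : Fin Nφ → ℝ) (lamΨ : Fin Nψ → ℝ) (lamSig : Fin 2 → ℝ)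
    (hflatΦ : ∀ (x : X) (n : Fin Nφ),
      (∑ φ : X → Fin Nφ, if φ x = n then PΦ φ else 0) = lamΦ n)
    (hflatΨ : ∀ (x : X) (m : Fin Nψ),
      (∑ ψ : X → Fin Nψ, if ψ x = m then PΨ ψ else 0) = lamΨ m)
    (hflatSig : ∀ (x : X) (s : Fin 2),
      (∑ σ : X → Fin 2, if σ x = s then PSig σ else 0) = lamSig s) :
    ∀ (x : X) (n : Fin (Nφ + Nψ)),
      (∑ t : (X → Fin Nφ) × (X → Fin Nψ) × (X → Fin 2),
          if overlayLabel Nφ Nψ t.1 t.2.1 t.2.2 x = n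
          then PΦ t.1 * PΨ t.2.1 * PSig t.2.2 else 0)
        =
      if h : (n : ℕ) < Nφ
      then lamΦ ⟨n, h⟩ * lamSig 0
      else lamΨ ⟨(n : ℕ) - Nφ, by omega⟩ * lamSig 1 := by
  intro x n
  induction n using Fin.addCases with
  | left k =>
    have hfactor := Fintype.sum_prod_ite_and_mul (fun φ => φ x = k) (fun _ => True)
      (fun σ => σ x = 0) PΦ PΨ PSig
    simp only [true_and, if_true, hPΨ1, hflatΦ, hflatSig] at hfactor
    simp [overlayLabel_eq_castAdd_iff, hfactor]
  | right k =>
    have hfactor := Fintype.sum_prod_ite_and_mul (fun _ => True) (fun ψ => ψ x = k)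
      (fun σ => σ x = 1) PΦ PΨ PSig
    simp only [true_and, if_true, hPΦ1, hflatΨ, hflatSig] at hfactor
    simp [overlayLabel_eq_natAdd_iff, hfactor]
end
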